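/- (Proposition 1) If J is a justification over a definition Δ that justifies a set L of domain literals, then every literal occurring in the subgraph J_L is true in every model of Δ in which all the open leaves of J_L are true. -/
import Mathlib


namespace LazyMX

/-- The four truth values: true, false, unknown, inconsistent. -/
inductive TV : Type where
  | t | f | u | i
deriving DecidableEq

namespace TV

/-- The truth order `f <_t u <_t t`, `f <_t i <_t t`. -/
def truthLe (a b : TV) : Prop := a = b ∨ a = f ∨ b = t

/-- The precision order `u <_p t <_p i`, `u <_p f <_p i`. -/
def precLe (a b : TV) : Prop := a = b ∨ a = u ∨ b = i

/-- The inverse of a truth value. -/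
def inv : TV → TV
  | t => f
  | f => t
  | u => u
  | i => i

open Classical in
/-- Greatest lower bound of a set of truth values w.r.t. the truth order. -/
noncomputable def sInf (S : Set TV) : TV :=
  if f ∈ S ∨ (u ∈ S ∧ i ∈ S) then f
  else if u ∈ S then u
  else if i ∈ S then i
  else t

open Classical in
/-- Least upper bound of a set of truth values w.r.t. the truth order. -/
noncomputable def sSup (S : Set TV) : TV :=
  if t ∈ S ∨ (u ∈ S ∧ i ∈ S) then t
  else if u ∈ S then u
  else if i ∈ S then i
  else f

/-- Minimum (meet) of two truth values under the truth order. -/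
noncomputable def tmin (a b : TV) : TV := sInf {a, b}

/-- Maximum (join) of two truth values under the truth order. -/
noncomputable def tmax (a b : TV) : TV := sSup {a, b}

end TV

/-- A (function-free) vocabulary: a type of predicate symbols with arities. -/
structure Voc : Type 1 where
  Pred : Type
  arity : Pred → ℕ

/-- A domain atom `P(d₁,…,dₙ)`. -/
structure Atom (σ : Voc) (D : Type) : Type where
  pred : σ.Pred
  args : Fin (σ.arity pred) → D

/-- A domain literal: an atom or its negation. -/
inductive Lit (σ : Voc) (D : Type) : Type where
  | pos : Atom σ D → Lit σ D
  | neg : Atom σ D → Lit σ D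

namespace Lit
variable {σ : Voc} {D : Type}

def atom : Lit σ D → Atom σ D
  | pos a => a
  | neg a => a

def negate : Lit σ D → Lit σ D
  | pos a => neg a
  | neg a => pos a

def isNeg : Lit σ D → Prop
  | pos _ => False
  | neg _ => True

/-- The truth value a literal asks for: `t` for a positive, `f` for a negative literal. -/
def sign : Lit σ D → TV
  | pos _ => TV.t
  | neg _ => TV.f

end Lit

/-- A four-valued structure with domain `D`: an assignment of truth values to domain atoms. -/
def Struct (σ : Voc) (D : Type) : Type := Atom σ D → TV

variable {σ : Voc} {D : Type}

def TwoValued (I : Struct σ D) : Prop := ∀ a, I a = TV.t ∨ I a = TV.f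

def ThreeValued (I : Struct σ D) : Prop := ∀ a, I a ≠ TV.i

/-- `J` expands `I` (`I ≤_p J` pointwise). -/
def ExpandsS (I J : Struct σ D) : Prop := ∀ a, TV.precLe (I a) (J a)

/-- A set of domain literals is consistent if no atom occurs both positively and negatively. -/
def ConsistentSet (S : Set (Lit σ D)) : Prop := ∀ a, ¬ (Lit.pos a ∈ S ∧ Lit.neg a ∈ S)

open Classical in
/-- The four-valued structure corresponding to a set of domain literals. -/
noncomputable def toStruct (S : Set (Lit σ D)) : Struct σ D := fun a =>
  if Lit.pos a ∈ S then (if Lit.neg a ∈ S then TV.i else TV.t)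
  else (if Lit.neg a ∈ S then TV.f else TV.u)

/-- A literal is true in a structure. -/
def litTrue (I : Struct σ D) : Lit σ D → Prop
  | Lit.pos a => I a = TV.t
  | Lit.neg a => I a = TV.f

/-- A literal is false in a structure. -/
def litFalse (I : Struct σ D) : Lit σ D → Prop
  | Lit.pos a => I a = TV.f
  | Lit.neg a => I a = TV.t

/-- First-order formulas over domain atoms, with quantifiers ranging over explicitly
given subsets of the domain; quantified bodies are represented as `D`-indexed families
(`b d` is the instance `φ[x↦d]`). -/
inductive Formula (σ : Voc) (D : Type) : Type where
  | atom : Atom σ D → Formula σ D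
  | not : Formula σ D → Formula σ D
  | and : Formula σ D → Formula σ D → Formula σ D
  | or : Formula σ D → Formula σ D → Formula σ D
  | all : Set D → (D → Formula σ D) → Formula σ D
  | ex : Set D → (D → Formula σ D) → Formula σ D

/-- The standard four-valued truth assignment. -/
noncomputable def Formula.eval (I : Struct σ D) : Formula σ D → TV
  | Formula.atom a => I a
  | Formula.not φ => (φ.eval I).inv
  | Formula.and φ ψ => TV.tmin (φ.eval I) (ψ.eval I)
  | Formula.or φ ψ => TV.tmax (φ.eval I) (ψ.eval I)
  | Formula.all D' b => TV.sInf { v | ∃ d ∈ D', (b d).eval I = v }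
  | Formula.ex D' b => TV.sSup { v | ∃ d ∈ D', (b d).eval I = v }

/-- The predicate symbols occurring in a formula. -/
def Formula.preds : Formula σ D → Set σ.Pred
  | Formula.atom a => {a.pred}
  | Formula.not φ => φ.preds
  | Formula.and φ ψ => φ.preds ∪ ψ.preds
  | Formula.or φ ψ => φ.preds ∪ ψ.preds
  | Formula.all _ b => ⋃ d, (b d).preds
  | Formula.ex _ b => ⋃ d, (b d).preds

/-- A rule `∀ x̄ ∈ D̄ : P(x̄) ← φ`; `body d̄` is the instantiated body `φ[x̄↦d̄]`. -/
structure Rule (σ : Voc) (D : Type) : Type where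
  head : σ.Pred
  dom : Set (Fin (σ.arity head) → D)
  body : (Fin (σ.arity head) → D) → Formula σ D

/-- A definition: a set of rules. -/
abbrev Defn (σ : Voc) (D : Type) := Set (Rule σ D)

/-- The rule `r` defines the atom `a`. -/
def Rule.defines (r : Rule σ D) (a : Atom σ D) : Prop :=
  ∃ d ∈ r.dom, a = ⟨r.head, d⟩

def definedAtom (Δ : Defn σ D) (a : Atom σ D) : Prop := ∃ r ∈ Δ, r.defines a

def openAtom (Δ : Defn σ D) (a : Atom σ D) : Prop := ¬ definedAtom Δ a

def definedLit (Δ : Defn σ D) (l : Lit σ D) : Prop := definedAtom Δ l.atom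

def openLit (Δ : Defn σ D) (l : Lit σ D) : Prop := ¬ definedAtom Δ l.atom

/-- Each domain atom is defined by at most one rule. -/
def WellFormed (Δ : Defn σ D) : Prop :=
  ∀ a r₁ r₂, r₁ ∈ Δ → r₂ ∈ Δ → r₁.defines a → r₂.defines a → r₁ = r₂

/-- The value of the body of the rule instance defining `a`, evaluated in `I`. -/
noncomputable def bodyVal (Δ : Defn σ D) (I : Struct σ D) (a : Atom σ D) : TV :=
  TV.sSup { v | ∃ r ∈ Δ, ∃ d ∈ r.dom, a = ⟨r.head, d⟩ ∧ (r.body d).eval I = v }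

open Classical in
/-- Combine a lower set `x` and an upper set `y` of defined atoms with an interpretation
`Io` of the open atoms into a four-valued structure. -/
noncomputable def combine (Δ : Defn σ D) (Io : Struct σ D) (x y : Set (Atom σ D)) :
    Struct σ D := fun a =>
  if definedAtom Δ a then
    (if a ∈ x then (if a ∈ y then TV.t else TV.i) else (if a ∈ y then TV.u else TV.f))
  else Io a

/-- Lower component of the four-valued immediate consequence operator. -/
def lowerOp (Δ : Defn σ D) (Io : Struct σ D) (x y : Set (Atom σ D)) : Set (Atom σ D) :=
  { a | definedAtom Δ a ∧
      (bodyVal Δ (combine Δ Io x y) a = TV.t ∨ bodyVal Δ (combine Δ Io x y) a = TV.i) }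

/-- Upper component of the four-valued immediate consequence operator. -/
def upperOp (Δ : Defn σ D) (Io : Struct σ D) (x y : Set (Atom σ D)) : Set (Atom σ D) :=
  { a | definedAtom Δ a ∧
      (bodyVal Δ (combine Δ Io x y) a = TV.t ∨ bodyVal Δ (combine Δ Io x y) a = TV.u) }

/-- Stable revision, lower half: least fixpoint of the lower operator with `y` fixed. -/
def stableLower (Δ : Defn σ D) (Io : Struct σ D) (y : Set (Atom σ D)) : Set (Atom σ D) :=
  ⋂₀ { x | lowerOp Δ Io x y ⊆ x }

/-- Stable revision, upper half: least fixpoint of the upper operator with `x` fixed. -/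
def stableUpper (Δ : Defn σ D) (Io : Struct σ D) (x : Set (Atom σ D)) : Set (Atom σ D) :=
  ⋂₀ { y | upperOp Δ Io x y ⊆ y }

/-- Precision-prefixpoints of the stable revision operator. -/
def wfPrefixpoints (Δ : Defn σ D) (Io : Struct σ D) :
    Set (Set (Atom σ D) × Set (Atom σ D)) :=
  { p | stableLower Δ Io p.2 ⊆ p.1 ∧ p.2 ⊆ stableUpper Δ Io p.1 }

/-- Lower half of the well-founded fixpoint (the precision-least fixpoint of stable revision). -/
def wfLower (Δ : Defn σ D) (Io : Struct σ D) : Set (Atom σ D) :=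
  ⋂₀ (Prod.fst '' wfPrefixpoints Δ Io)

/-- Upper half of the well-founded fixpoint. -/
def wfUpper (Δ : Defn σ D) (Io : Struct σ D) : Set (Atom σ D) :=
  ⋃₀ (Prod.snd '' wfPrefixpoints Δ Io)

/-- The (parametrized) well-founded model `wf_Δ(Io|open(Δ))` of `Δ`; it agrees with `Io`
on the open atoms and is the well-founded fixpoint on the defined atoms. -/
noncomputable def wfModel (Δ : Defn σ D) (Io : Struct σ D) : Struct σ D :=
  combine Δ Io (wfLower Δ Io) (wfUpper Δ Io)

/-- A two-valued structure is a model of the definition `Δ` if it equals the well-founded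
model of `Δ` relative to its restriction to the open atoms. -/
def IsModelOfDef (I : Struct σ D) (Δ : Defn σ D) : Prop :=
  TwoValued I ∧ ∀ a, I a = wfModel Δ I a

/-- `Δ` is total: the well-founded model is two-valued for every two-valued
interpretation of the open atoms. -/
def IsTotalDef (Δ : Defn σ D) : Prop :=
  ∀ Io : Struct σ D, TwoValued Io → TwoValued (wfModel Δ Io)

/-- A model of the canonical theory `{P_t, Δ}`. -/
def IsModelOfTheory (I : Struct σ D) (pt : Atom σ D) (Δ : Defn σ D) : Prop :=
  IsModelOfDef I Δ ∧ I pt = TV.t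

/-- A direct justification for a defined literal `l`: a consistent nonempty set `S` of
domain literals making the body of the rule instance defining `l.atom` true
(for positive `l`) resp. false (for negative `l`). -/
def IsDirectJust (Δ : Defn σ D) (l : Lit σ D) (S : Set (Lit σ D)) : Prop :=
  ConsistentSet S ∧ S.Nonempty ∧
    ∃ r ∈ Δ, ∃ d ∈ r.dom, l.atom = ⟨r.head, d⟩ ∧ (r.body d).eval (toStruct S) = l.sign

/-- A justification over `Δ`: a graph assigning to each literal either no children or a
direct justification. -/
def IsJustification (Δ : Defn σ D) (J : Lit σ D → Set (Lit σ D)) : Prop :=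
  ∀ l, J l = ∅ ∨ IsDirectJust Δ l (J l)

/-- Reachability in the justification graph. -/
def Reach (J : Lit σ D → Set (Lit σ D)) : Lit σ D → Lit σ D → Prop :=
  Relation.ReflTransGen (fun x y => y ∈ J x)

/-- The nodes of the subgraph `J_L` reachable from the set `L` of literals. -/
def reachSet (J : Lit σ D → Set (Lit σ D)) (L : Set (Lit σ D)) : Set (Lit σ D) :=
  { x | ∃ l ∈ L, Reach J l x }

/-- `J` is total for `L`: `J` is defined in every defined literal reachable from `L`. -/
def TotalFor (Δ : Defn σ D) (J : Lit σ D → Set (Lit σ D)) (L : Set (Lit σ D)) : Prop :=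
  ∀ x ∈ reachSet J L, definedLit Δ x → J x ≠ ∅

/-- An infinite path in the subgraph `J_l`. -/
def IsInfPathFrom (J : Lit σ D → Set (Lit σ D)) (l : Lit σ D) (p : ℕ → Lit σ D) : Prop :=
  Reach J l (p 0) ∧ ∀ n, p (n + 1) ∈ J (p n)

/-- `l` is well-founded in `J`: every infinite path in `J_l` is negative. -/
def WellFoundedIn (J : Lit σ D → Set (Lit σ D)) (l : Lit σ D) : Prop :=
  ∀ p : ℕ → Lit σ D, IsInfPathFrom J l p → ∀ n, (p n).isNeg

/-- `J` justifies `L`: `J_L` is total for `L`, every literal of `L` is well-founded,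
and the set of literals in `J_L` is consistent. -/
def Justifies (Δ : Defn σ D) (J : Lit σ D → Set (Lit σ D)) (L : Set (Lit σ D)) : Prop :=
  TotalFor Δ J L ∧ (∀ l ∈ L, WellFoundedIn J l) ∧ ConsistentSet (reachSet J L)

/-- The part of `J` on the nodes `N` is consistent with the literal-set structure `I`:
`I` is consistent and no literal of `N` in which `J` is defined is false in `I`. -/
def ConsistentWithOn (J : Lit σ D → Set (Lit σ D)) (N I : Set (Lit σ D)) : Prop :=
  ConsistentSet I ∧ ∀ l ∈ N, J l ≠ ∅ → l.negate ∉ I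

/-- The predicate symbols occurring in a definition. -/
def vocDef (Δ : Defn σ D) : Set σ.Pred :=
  { P | ∃ r ∈ Δ, r.head = P } ∪ { P | ∃ r ∈ Δ, ∃ d ∈ r.dom, P ∈ (r.body d).preds }

open Classical in
/-- Restriction of a structure to the symbols in `s` (everything else becomes unknown). -/
noncomputable def restrictP (s : Set σ.Pred) (I : Struct σ D) : Struct σ D :=
  fun a => if a.pred ∈ s then I a else TV.u

open Classical in
/-- Restriction of a structure to a set of atoms (everything else becomes unknown). -/
noncomputable def restrictA (A : Set (Atom σ D)) (I : Struct σ D) : Struct σ D :=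
  fun a => if a ∈ A then I a else TV.u

/-- Strong `s`-equivalence of two classes of models: each model of one, restricted to `s`,
expands in a unique way to a model of the other. -/
def StronglyEquivModels (s : Set σ.Pred) (M M' : Set (Struct σ D)) : Prop :=
  (∀ I ∈ M, ∃! I', I' ∈ M' ∧ ExpandsS (restrictP s I) I') ∧
  (∀ I' ∈ M', ∃! I, I ∈ M ∧ ExpandsS (restrictP s I') I)

/-- Strong `s`-equivalence of two definitions. -/
def StronglyEquivDef (s : Set σ.Pred) (Δ₁ Δ₂ : Defn σ D) : Prop :=
  StronglyEquivModels s { I | IsModelOfDef I Δ₁ } { I | IsModelOfDef I Δ₂ }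

/-- A (two-valued) structure expands a literal-set structure. -/
def expandsLit (Iin : Set (Lit σ D)) (M : Struct σ D) : Prop := ∀ l ∈ Iin, litTrue M l

/-- Strong `s`-equivalence of two definitions in the input structure `Iin`. -/
def StronglyEquivDefIn (s : Set σ.Pred) (Iin : Set (Lit σ D)) (Δ₁ Δ₂ : Defn σ D) : Prop :=
  StronglyEquivModels s { I | IsModelOfDef I Δ₁ ∧ expandsLit Iin I }
    { I | IsModelOfDef I Δ₂ ∧ expandsLit Iin I }

/-- The domain atom of a 0-ary predicate symbol. -/
def ptAtom (σ : Voc) (D : Type) (Pt : σ.Pred) (h : σ.arity Pt = 0) : Atom σ D :=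
  ⟨Pt, fun j => Fin.elim0 (h ▸ j)⟩

/-- An acceptable state `⟨Δg, Δd, J, I⟩` for the canonical theory `{P_t, Δ}` with input
structure `Iin`. -/
structure AcceptableState (Δ : Defn σ D) (Iin : Set (Lit σ D))
    (Δg Δd : Defn σ D) (J : Lit σ D → Set (Lit σ D)) (I : Set (Lit σ D)) : Prop where
  wf_gd : WellFormed (Δg ∪ Δd)
  wf_g : WellFormed Δg
  wf_d : WellFormed Δd
  total_gd : IsTotalDef (Δg ∪ Δd)
  total_g : IsTotalDef Δg
  total_d : IsTotalDef Δd
  equiv : StronglyEquivDef (vocDef Δ) (Δg ∪ Δd) Δ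
  disj : ∀ a, ¬ (definedAtom Δg a ∧ definedAtom Δd a)
  just : IsJustification (Δg ∪ Δd) J
  expands : Iin ⊆ I
  justified : Justifies (Δg ∪ Δd) J { l | l ∈ I ∧ definedLit Δd l }
  consistentWith : ConsistentWithOn J (reachSet J { l | l ∈ I ∧ definedLit Δd l }) I

/-- A default acceptable state. -/
structure DefaultAcceptableState (Δ : Defn σ D) (Iin : Set (Lit σ D))
    (Δg Δd : Defn σ D) (J : Lit σ D → Set (Lit σ D)) (I : Set (Lit σ D))
    extends AcceptableState Δ Iin Δg Δd J I : Prop where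
  dj_open_or_defd : ∀ l l', l' ∈ J l → openLit (Δg ∪ Δd) l' ∨ definedLit Δd l'
  justifies_defined : Justifies (Δg ∪ Δd) J { l | J l ≠ ∅ }

/-- A model of a theory (list of sentences plus a definition) relative to a vocabulary `s`:
two-valued on `s`, unknown outside `s`, satisfying all sentences and the definition. -/
def IsModelOfTOn (s : Set σ.Pred) (M : Struct σ D) (φs : List (Formula σ D))
    (Δ : Defn σ D) : Prop :=
  (∀ a : Atom σ D, a.pred ∈ s → M a = TV.t ∨ M a = TV.f) ∧
  (∀ a : Atom σ D, a.pred ∉ s → M a = TV.u) ∧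
  (∀ φ ∈ φs, φ.eval M = TV.t) ∧
  (∀ a : Atom σ D, a.pred ∈ s → M a = wfModel Δ M a)

/-- A model of a canonical theory `{pt, Δ}` relative to a vocabulary `s`. -/
def IsModelOfCanonOn (s : Set σ.Pred) (M : Struct σ D) (pt : Atom σ D)
    (Δ : Defn σ D) : Prop :=
  (∀ a : Atom σ D, a.pred ∈ s → M a = TV.t ∨ M a = TV.f) ∧
  (∀ a : Atom σ D, a.pred ∉ s → M a = TV.u) ∧
  M pt = TV.t ∧
  (∀ a : Atom σ D, a.pred ∈ s → M a = wfModel Δ M a)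

/-- A model of a definition relative to a vocabulary `s`: two-valued on `s`,
unknown outside `s`, and satisfying the well-founded-model equation on `s`. -/
def IsModelOfDefOn (s : Set σ.Pred) (I : Struct σ D) (Δ : Defn σ D) : Prop :=
  (∀ a : Atom σ D, a.pred ∈ s → I a = TV.t ∨ I a = TV.f) ∧
  (∀ a : Atom σ D, a.pred ∉ s → I a = TV.u) ∧
  (∀ a : Atom σ D, a.pred ∈ s → I a = wfModel Δ I a)

/-! ### Auxiliary lemmas for Proposition 1 -/

section Aux

instance : Fintype TV :=
  ⟨⟨[TV.t, TV.f, TV.u, TV.i], by decide⟩, fun x => by cases x <;> decide⟩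

instance (a b : TV) : Decidable (TV.precLe a b) := by
  unfold TV.precLe; infer_instance

lemma TV.precLe_refl (a : TV) : a.precLe a := Or.inl rfl

lemma TV.u_precLe (a : TV) : TV.u.precLe a := Or.inr (Or.inl rfl)

lemma TV.inv_mono : ∀ {a b : TV}, a.precLe b → a.inv.precLe b.inv := by decide

lemma TV.up_ti : ∀ {a b : TV}, a.precLe b → (a = TV.t ∨ a = TV.i) →
    (b = TV.t ∨ b = TV.i) := by decide

lemma TV.down_tu : ∀ {a b : TV}, a.precLe b → (b = TV.t ∨ b = TV.u) →
    (a = TV.t ∨ a = TV.u) := by decide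

lemma TV.eq_t_of : ∀ {v : TV}, TV.t.precLe v → (v = TV.t ∨ v = TV.f) → v = TV.t := by decide

lemma TV.eq_f_of : ∀ {v : TV}, TV.f.precLe v → (v = TV.t ∨ v = TV.f) → v = TV.f := by decide

lemma TV.f_not_tu : ∀ {v : TV}, TV.f.precLe v → (v = TV.t ∨ v = TV.u) → False := by decide

lemma TV.precLe_f_inv : ∀ {v : TV}, v.precLe TV.f → v = TV.f ∨ v = TV.u := by decide
lemma TV.precLe_u_inv : ∀ {v : TV}, v.precLe TV.u → v = TV.u := by decide
lemma TV.precLe_t_inv : ∀ {v : TV}, v.precLe TV.t → v = TV.t ∨ v = TV.u := by decide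
lemma TV.f_precLe_inv : ∀ {w : TV}, TV.f.precLe w → w = TV.f ∨ w = TV.i := by decide
lemma TV.i_precLe_inv : ∀ {w : TV}, TV.i.precLe w → w = TV.i := by decide
lemma TV.t_precLe_inv : ∀ {w : TV}, TV.t.precLe w → w = TV.t ∨ w = TV.i := by decide

/- sInf computation lemmas -/

lemma TV.sInf_of_f {S : Set TV} (h : TV.f ∈ S) : TV.sInf S = TV.f := by
  simp [TV.sInf, h]

lemma TV.sInf_of_ui {S : Set TV} (hu : TV.u ∈ S) (hi : TV.i ∈ S) : TV.sInf S = TV.f := by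
  simp [TV.sInf, hu, hi]

lemma TV.sInf_of_i {S : Set TV} (hi : TV.i ∈ S) (hf : TV.f ∉ S) (hu : TV.u ∉ S) :
    TV.sInf S = TV.i := by
  simp [TV.sInf, hf, hu, hi]

lemma TV.sInf_no_fu {S : Set TV} (hf : TV.f ∉ S) (hu : TV.u ∉ S) :
    TV.sInf S = TV.i ∨ TV.sInf S = TV.t := by
  by_cases hi : TV.i ∈ S <;> simp [TV.sInf, hf, hu, hi]

lemma TV.sInf_eq_t {S : Set TV} (h : TV.sInf S = TV.t) :
    TV.f ∉ S ∧ TV.u ∉ S ∧ TV.i ∉ S := by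
  unfold TV.sInf at h
  split_ifs at h with h1 h2 h3 <;> first
    | (exact absurd h (by decide))
    | (push_neg at h1; exact ⟨h1.1, h2, h3⟩)

lemma TV.sInf_eq_f {S : Set TV} (h : TV.sInf S = TV.f) :
    TV.f ∈ S ∨ (TV.u ∈ S ∧ TV.i ∈ S) := by
  unfold TV.sInf at h
  split_ifs at h with h1 h2 h3 <;> first
    | exact h1
    | exact absurd h (by decide)

lemma TV.sInf_eq_i {S : Set TV} (h : TV.sInf S = TV.i) :
    TV.i ∈ S ∧ TV.f ∉ S ∧ TV.u ∉ S := by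
  unfold TV.sInf at h
  split_ifs at h with h1 h2 h3 <;> first
    | (push_neg at h1; exact ⟨h3, h1.1, h2⟩)
    | exact absurd h (by decide)

lemma TV.sInf_twoval {S : Set TV} (h : ∀ v ∈ S, v = TV.t ∨ v = TV.f) :
    TV.sInf S = TV.t ∨ TV.sInf S = TV.f := by
  have hu : TV.u ∉ S := fun hu => absurd (h _ hu) (by decide)
  have hi : TV.i ∉ S := fun hi => absurd (h _ hi) (by decide)
  by_cases hf : TV.f ∈ S <;> simp [TV.sInf, hf, hu, hi]

/- sSup computation lemmas -/

lemma TV.sSup_of_t {S : Set TV} (h : TV.t ∈ S) : TV.sSup S = TV.t := by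
  simp [TV.sSup, h]

lemma TV.sSup_of_ui {S : Set TV} (hu : TV.u ∈ S) (hi : TV.i ∈ S) : TV.sSup S = TV.t := by
  simp [TV.sSup, hu, hi]

lemma TV.sSup_of_i {S : Set TV} (hi : TV.i ∈ S) (ht : TV.t ∉ S) (hu : TV.u ∉ S) :
    TV.sSup S = TV.i := by
  simp [TV.sSup, ht, hu, hi]

lemma TV.sSup_no_tu {S : Set TV} (ht : TV.t ∉ S) (hu : TV.u ∉ S) :
    TV.sSup S = TV.i ∨ TV.sSup S = TV.f := by
  by_cases hi : TV.i ∈ S <;> simp [TV.sSup, ht, hu, hi]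

lemma TV.sSup_eq_f {S : Set TV} (h : TV.sSup S = TV.f) :
    TV.t ∉ S ∧ TV.u ∉ S ∧ TV.i ∉ S := by
  unfold TV.sSup at h
  split_ifs at h with h1 h2 h3 <;> first
    | (exact absurd h (by decide))
    | (push_neg at h1; exact ⟨h1.1, h2, h3⟩)

lemma TV.sSup_eq_t {S : Set TV} (h : TV.sSup S = TV.t) :
    TV.t ∈ S ∨ (TV.u ∈ S ∧ TV.i ∈ S) := by
  unfold TV.sSup at h
  split_ifs at h with h1 h2 h3 <;> first
    | exact h1
    | exact absurd h (by decide)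

lemma TV.sSup_eq_i {S : Set TV} (h : TV.sSup S = TV.i) :
    TV.i ∈ S ∧ TV.t ∉ S ∧ TV.u ∉ S := by
  unfold TV.sSup at h
  split_ifs at h with h1 h2 h3 <;> first
    | (push_neg at h1; exact ⟨h3, h1.1, h2⟩)
    | exact absurd h (by decide)

lemma TV.sSup_twoval {S : Set TV} (h : ∀ v ∈ S, v = TV.t ∨ v = TV.f) :
    TV.sSup S = TV.t ∨ TV.sSup S = TV.f := by
  have hu : TV.u ∉ S := fun hu => absurd (h _ hu) (by decide)
  have hi : TV.i ∉ S := fun hi => absurd (h _ hi) (by decide)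
  by_cases ht : TV.t ∈ S <;> simp [TV.sSup, ht, hu, hi]

lemma TV.sSup_singleton (v : TV) : TV.sSup {v} = v := by
  cases v <;> simp [TV.sSup]

/- monotonicity of sInf and sSup w.r.t. the precision order -/

lemma TV.sInf_mono {S S' : Set TV}
    (h1 : ∀ v ∈ S, ∃ w ∈ S', v.precLe w)
    (h2 : ∀ w ∈ S', ∃ v ∈ S, v.precLe w) :
    (TV.sInf S).precLe (TV.sInf S') := by
  match hX : TV.sInf S with
  | TV.u => exact TV.u_precLe _
  | TV.t =>
    obtain ⟨hf, hu, hi⟩ := TV.sInf_eq_t hX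
    have hf' : TV.f ∉ S' := fun hf' => by
      obtain ⟨v, hv, hle⟩ := h2 _ hf'
      have : v = TV.f ∨ v = TV.u := TV.precLe_f_inv hle
      rcases this with rfl | rfl
      · exact hf hv
      · exact hu hv
    have hu' : TV.u ∉ S' := fun hu' => by
      obtain ⟨v, hv, hle⟩ := h2 _ hu'
      have : v = TV.u := TV.precLe_u_inv hle
      exact hu (this ▸ hv)
    rcases TV.sInf_no_fu hf' hu' with h | h <;> rw [h] <;> decide
  | TV.f =>
    have hY : TV.sInf S' = TV.f ∨ TV.sInf S' = TV.i := by
      rcases TV.sInf_eq_f hX with hf | ⟨hu, hi⟩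
      · obtain ⟨w, hw, hle⟩ := h1 _ hf
        have : w = TV.f ∨ w = TV.i := TV.f_precLe_inv hle
        rcases this with rfl | rfl
        · exact Or.inl (TV.sInf_of_f hw)
        · by_cases hf' : TV.f ∈ S'
          · exact Or.inl (TV.sInf_of_f hf')
          · by_cases hu' : TV.u ∈ S'
            · exact Or.inl (TV.sInf_of_ui hu' hw)
            · exact Or.inr (TV.sInf_of_i hw hf' hu')
      · obtain ⟨w, hw, hle⟩ := h1 _ hi
        have : w = TV.i := TV.i_precLe_inv hle
        subst this
        by_cases hf' : TV.f ∈ S'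
        · exact Or.inl (TV.sInf_of_f hf')
        · by_cases hu' : TV.u ∈ S'
          · exact Or.inl (TV.sInf_of_ui hu' hw)
          · exact Or.inr (TV.sInf_of_i hw hf' hu')
    rcases hY with h | h <;> rw [h] <;> decide
  | TV.i =>
    obtain ⟨hi, hf, hu⟩ := TV.sInf_eq_i hX
    obtain ⟨w, hw, hle⟩ := h1 _ hi
    have : w = TV.i := TV.i_precLe_inv hle
    subst this
    have hf' : TV.f ∉ S' := fun hf' => by
      obtain ⟨v, hv, hle⟩ := h2 _ hf'
      have : v = TV.f ∨ v = TV.u := TV.precLe_f_inv hle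
      rcases this with rfl | rfl
      · exact hf hv
      · exact hu hv
    have hu' : TV.u ∉ S' := fun hu' => by
      obtain ⟨v, hv, hle⟩ := h2 _ hu'
      have : v = TV.u := TV.precLe_u_inv hle
      exact hu (this ▸ hv)
    rw [TV.sInf_of_i hw hf' hu']
    decide

lemma TV.sSup_mono {S S' : Set TV}
    (h1 : ∀ v ∈ S, ∃ w ∈ S', v.precLe w)
    (h2 : ∀ w ∈ S', ∃ v ∈ S, v.precLe w) :
    (TV.sSup S).precLe (TV.sSup S') := by
  match hX : TV.sSup S with
  | TV.u => exact TV.u_precLe _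
  | TV.f =>
    obtain ⟨ht, hu, hi⟩ := TV.sSup_eq_f hX
    have ht' : TV.t ∉ S' := fun ht' => by
      obtain ⟨v, hv, hle⟩ := h2 _ ht'
      have : v = TV.t ∨ v = TV.u := TV.precLe_t_inv hle
      rcases this with rfl | rfl
      · exact ht hv
      · exact hu hv
    have hu' : TV.u ∉ S' := fun hu' => by
      obtain ⟨v, hv, hle⟩ := h2 _ hu'
      have : v = TV.u := TV.precLe_u_inv hle
      exact hu (this ▸ hv)
    rcases TV.sSup_no_tu ht' hu' with h | h <;> rw [h] <;> decide
  | TV.t =>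
    have hY : TV.sSup S' = TV.t ∨ TV.sSup S' = TV.i := by
      rcases TV.sSup_eq_t hX with ht | ⟨hu, hi⟩
      · obtain ⟨w, hw, hle⟩ := h1 _ ht
        have : w = TV.t ∨ w = TV.i := TV.t_precLe_inv hle
        rcases this with rfl | rfl
        · exact Or.inl (TV.sSup_of_t hw)
        · by_cases ht' : TV.t ∈ S'
          · exact Or.inl (TV.sSup_of_t ht')
          · by_cases hu' : TV.u ∈ S'
            · exact Or.inl (TV.sSup_of_ui hu' hw)
            · exact Or.inr (TV.sSup_of_i hw ht' hu')
      · obtain ⟨w, hw, hle⟩ := h1 _ hi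
        have : w = TV.i := TV.i_precLe_inv hle
        subst this
        by_cases ht' : TV.t ∈ S'
        · exact Or.inl (TV.sSup_of_t ht')
        · by_cases hu' : TV.u ∈ S'
          · exact Or.inl (TV.sSup_of_ui hu' hw)
          · exact Or.inr (TV.sSup_of_i hw ht' hu')
    rcases hY with h | h <;> rw [h] <;> decide
  | TV.i =>
    obtain ⟨hi, ht, hu⟩ := TV.sSup_eq_i hX
    obtain ⟨w, hw, hle⟩ := h1 _ hi
    have : w = TV.i := TV.i_precLe_inv hle
    subst this
    have ht' : TV.t ∉ S' := fun ht' => by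
      obtain ⟨v, hv, hle⟩ := h2 _ ht'
      have : v = TV.t ∨ v = TV.u := TV.precLe_t_inv hle
      rcases this with rfl | rfl
      · exact ht hv
      · exact hu hv
    have hu' : TV.u ∉ S' := fun hu' => by
      obtain ⟨v, hv, hle⟩ := h2 _ hu'
      have : v = TV.u := TV.precLe_u_inv hle
      exact hu (this ▸ hv)
    rw [TV.sSup_of_i hw ht' hu']
    decide

variable {σ' : Voc} {D' : Type}

/-- Four-valued evaluation is monotone w.r.t. the precision order. -/
lemma eval_prec_mono {I I' : Struct σ' D'} (h : ∀ a, (I a).precLe (I' a)) :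
    ∀ φ : Formula σ' D', (φ.eval I).precLe (φ.eval I')
  | Formula.atom a => h a
  | Formula.not φ => TV.inv_mono (eval_prec_mono h φ)
  | Formula.and φ ψ => by
    apply TV.sInf_mono
    · rintro v (rfl | rfl)
      · exact ⟨_, Or.inl rfl, eval_prec_mono h φ⟩
      · exact ⟨_, Or.inr rfl, eval_prec_mono h ψ⟩
    · rintro w (rfl | rfl)
      · exact ⟨_, Or.inl rfl, eval_prec_mono h φ⟩
      · exact ⟨_, Or.inr rfl, eval_prec_mono h ψ⟩
  | Formula.or φ ψ => by
    apply TV.sSup_mono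
    · rintro v (rfl | rfl)
      · exact ⟨_, Or.inl rfl, eval_prec_mono h φ⟩
      · exact ⟨_, Or.inr rfl, eval_prec_mono h ψ⟩
    · rintro w (rfl | rfl)
      · exact ⟨_, Or.inl rfl, eval_prec_mono h φ⟩
      · exact ⟨_, Or.inr rfl, eval_prec_mono h ψ⟩
  | Formula.all Dd b => by
    apply TV.sInf_mono
    · rintro v ⟨d, hd, rfl⟩
      exact ⟨_, ⟨d, hd, rfl⟩, eval_prec_mono h (b d)⟩
    · rintro w ⟨d, hd, rfl⟩
      exact ⟨_, ⟨d, hd, rfl⟩, eval_prec_mono h (b d)⟩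
  | Formula.ex Dd b => by
    apply TV.sSup_mono
    · rintro v ⟨d, hd, rfl⟩
      exact ⟨_, ⟨d, hd, rfl⟩, eval_prec_mono h (b d)⟩
    · rintro w ⟨d, hd, rfl⟩
      exact ⟨_, ⟨d, hd, rfl⟩, eval_prec_mono h (b d)⟩

/-- Evaluation in a two-valued structure is two-valued. -/
lemma eval_twoval {I : Struct σ' D'} (h : TwoValued I) :
    ∀ φ : Formula σ' D', φ.eval I = TV.t ∨ φ.eval I = TV.f
  | Formula.atom a => h a
  | Formula.not φ => by
    rcases eval_twoval h φ with h' | h' <;> simp [Formula.eval, h', TV.inv]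
  | Formula.and φ ψ => by
    apply TV.sInf_twoval
    rintro v (rfl | rfl)
    · exact eval_twoval h φ
    · exact eval_twoval h ψ
  | Formula.or φ ψ => by
    apply TV.sSup_twoval
    rintro v (rfl | rfl)
    · exact eval_twoval h φ
    · exact eval_twoval h ψ
  | Formula.all Dd b => by
    apply TV.sInf_twoval
    rintro v ⟨d, hd, rfl⟩
    exact eval_twoval h (b d)
  | Formula.ex Dd b => by
    apply TV.sSup_twoval
    rintro v ⟨d, hd, rfl⟩
    exact eval_twoval h (b d)

/-- In a well-formed definition the body value of a defined atom is the value of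
the body of its unique defining rule instance. -/
lemma bodyVal_eq {Δ : Defn σ' D'} (hΔ : WellFormed Δ) {r : Rule σ' D'}
    {d : Fin (σ'.arity r.head) → D'} (hr : r ∈ Δ) (hd : d ∈ r.dom) (I : Struct σ' D') :
    bodyVal Δ I ⟨r.head, d⟩ = (r.body d).eval I := by
  have hset : { v | ∃ r' ∈ Δ, ∃ d' ∈ r'.dom,
      (⟨r.head, d⟩ : Atom σ' D') = ⟨r'.head, d'⟩ ∧ (r'.body d').eval I = v }
      = {(r.body d).eval I} := by
    apply Set.eq_singleton_iff_unique_mem.mpr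
    constructor
    · exact ⟨r, hr, d, hd, rfl, rfl⟩
    · rintro v ⟨r', hr', d', hd', heq, rfl⟩
      have hrr : r = r' := hΔ ⟨r.head, d⟩ r r' hr hr' ⟨d, hd, rfl⟩ ⟨d', hd', heq⟩
      subst hrr
      injection heq with h1 h2
      subst h2
      rfl
  rw [bodyVal, hset, TV.sSup_singleton]

/-- Body values are monotone w.r.t. the precision order. -/
lemma bodyVal_prec_mono {Δ : Defn σ' D'} {I I' : Struct σ' D'}
    (h : ∀ a, (I a).precLe (I' a)) (a : Atom σ' D') :
    (bodyVal Δ I a).precLe (bodyVal Δ I' a) := by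
  apply TV.sSup_mono
  · rintro v ⟨r, hr, d, hd, heq, rfl⟩
    exact ⟨_, ⟨r, hr, d, hd, heq, rfl⟩, eval_prec_mono h _⟩
  · rintro w ⟨r, hr, d, hd, heq, rfl⟩
    exact ⟨_, ⟨r, hr, d, hd, heq, rfl⟩, eval_prec_mono h _⟩

/- combine monotonicity -/

lemma combine_mono_x {Δ : Defn σ' D'} {Io : Struct σ' D'} {x x' y : Set (Atom σ' D')}
    (h : x ⊆ x') (a : Atom σ' D') :
    (combine Δ Io x y a).precLe (combine Δ Io x' y a) := by
  unfold combine
  by_cases hd : definedAtom Δ a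
  · by_cases hx : a ∈ x
    · simp [hd, hx, h hx, TV.precLe_refl]
    · by_cases hx' : a ∈ x' <;> by_cases hy : a ∈ y <;>
        simp [hd, hx, hx', hy, TV.precLe_refl] <;> decide
  · simp [hd, TV.precLe_refl]

lemma combine_anti_y {Δ : Defn σ' D'} {Io : Struct σ' D'} {x y y' : Set (Atom σ' D')}
    (h : y ⊆ y') (a : Atom σ' D') :
    (combine Δ Io x y' a).precLe (combine Δ Io x y a) := by
  unfold combine
  by_cases hd : definedAtom Δ a
  · by_cases hy : a ∈ y
    · simp [hd, hy, h hy, TV.precLe_refl]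
    · by_cases hy' : a ∈ y' <;> by_cases hx : a ∈ x <;>
        simp [hd, hy, hy', hx, TV.precLe_refl] <;> decide
  · simp [hd, TV.precLe_refl]

/- operator monotonicity -/

lemma lowerOp_mono_x {Δ : Defn σ' D'} {Io : Struct σ' D'} {x x' y : Set (Atom σ' D')}
    (h : x ⊆ x') : lowerOp Δ Io x y ⊆ lowerOp Δ Io x' y := by
  rintro a ⟨hd, hb⟩
  exact ⟨hd, TV.up_ti (bodyVal_prec_mono (combine_mono_x h) a) hb⟩

lemma lowerOp_anti_y {Δ : Defn σ' D'} {Io : Struct σ' D'} {x y y' : Set (Atom σ' D')}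
    (h : y ⊆ y') : lowerOp Δ Io x y' ⊆ lowerOp Δ Io x y := by
  rintro a ⟨hd, hb⟩
  exact ⟨hd, TV.up_ti (bodyVal_prec_mono (combine_anti_y h) a) hb⟩

lemma upperOp_mono_y {Δ : Defn σ' D'} {Io : Struct σ' D'} {x y y' : Set (Atom σ' D')}
    (h : y ⊆ y') : upperOp Δ Io x y ⊆ upperOp Δ Io x y' := by
  rintro a ⟨hd, hb⟩
  exact ⟨hd, TV.down_tu (bodyVal_prec_mono (combine_anti_y h) a) hb⟩

lemma upperOp_anti_x {Δ : Defn σ' D'} {Io : Struct σ' D'} {x x' y : Set (Atom σ' D')}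
    (h : x ⊆ x') : upperOp Δ Io x' y ⊆ upperOp Δ Io x y := by
  rintro a ⟨hd, hb⟩
  exact ⟨hd, TV.down_tu (bodyVal_prec_mono (combine_mono_x h) a) hb⟩

/- generic least fixpoint lemma -/

lemma lfp_fix {α : Type*} (F : Set α → Set α) (hm : ∀ ⦃x y : Set α⦄, x ⊆ y → F x ⊆ F y) :
    F (⋂₀ {x | F x ⊆ x}) = ⋂₀ {x | F x ⊆ x} := by
  have pre : F (⋂₀ {x | F x ⊆ x}) ⊆ ⋂₀ {x | F x ⊆ x} := by
    apply Set.subset_sInter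
    intro x hx
    exact (hm (Set.sInter_subset_of_mem hx)).trans hx
  have post : ⋂₀ {x | F x ⊆ x} ⊆ F (⋂₀ {x | F x ⊆ x}) :=
    Set.sInter_subset_of_mem (hm pre)
  exact Set.Subset.antisymm pre post

/- stable operator antitonicity -/

lemma stableLower_anti {Δ : Defn σ' D'} {Io : Struct σ' D'} {y y' : Set (Atom σ' D')}
    (h : y ⊆ y') : stableLower Δ Io y' ⊆ stableLower Δ Io y := by
  apply Set.subset_sInter
  intro x hx
  exact Set.sInter_subset_of_mem ((lowerOp_anti_y h).trans hx)

lemma stableUpper_anti {Δ : Defn σ' D'} {Io : Struct σ' D'} {x x' : Set (Atom σ' D')}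
    (h : x ⊆ x') : stableUpper Δ Io x' ⊆ stableUpper Δ Io x := by
  apply Set.subset_sInter
  intro y hy
  exact Set.sInter_subset_of_mem ((upperOp_anti_x h).trans hy)

/- the well-founded pair is a fixpoint of the stable revision operator -/

lemma wf_pre (Δ : Defn σ' D') (Io : Struct σ' D') :
    stableLower Δ Io (wfUpper Δ Io) ⊆ wfLower Δ Io ∧
      wfUpper Δ Io ⊆ stableUpper Δ Io (wfLower Δ Io) := by
  constructor
  · apply Set.subset_sInter
    rintro x ⟨p, hp, rfl⟩
    have h2 : p.2 ⊆ wfUpper Δ Io := Set.subset_sUnion_of_mem ⟨p, hp, rfl⟩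
    exact (stableLower_anti h2).trans hp.1
  · rintro a ⟨y, ⟨p, hp, rfl⟩, ha⟩
    have h1 : wfLower Δ Io ⊆ p.1 := Set.sInter_subset_of_mem ⟨p, hp, rfl⟩
    exact stableUpper_anti h1 (hp.2 ha)

lemma wf_fix (Δ : Defn σ' D') (Io : Struct σ' D') :
    wfLower Δ Io = stableLower Δ Io (wfUpper Δ Io) ∧
      wfUpper Δ Io = stableUpper Δ Io (wfLower Δ Io) := by
  obtain ⟨h1, h2⟩ := wf_pre Δ Io
  have hq : (stableLower Δ Io (wfUpper Δ Io), stableUpper Δ Io (wfLower Δ Io)) ∈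
      wfPrefixpoints Δ Io := by
    constructor
    · exact stableLower_anti h2
    · exact stableUpper_anti h1
  constructor
  · exact Set.Subset.antisymm (Set.sInter_subset_of_mem ⟨_, hq, rfl⟩) h1
  · exact Set.Subset.antisymm h2 (Set.subset_sUnion_of_mem ⟨_, hq, rfl⟩)

lemma lowerOp_wf_fix (Δ : Defn σ' D') (Io : Struct σ' D') :
    lowerOp Δ Io (wfLower Δ Io) (wfUpper Δ Io) = wfLower Δ Io := by
  have h := (wf_fix Δ Io).1
  rw [h]
  exact lfp_fix (fun x => lowerOp Δ Io x (wfUpper Δ Io)) (fun _ _ hxy => lowerOp_mono_x hxy)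

lemma upperOp_wf_fix (Δ : Defn σ' D') (Io : Struct σ' D') :
    upperOp Δ Io (wfLower Δ Io) (wfUpper Δ Io) = wfUpper Δ Io := by
  have h := (wf_fix Δ Io).2
  rw [h]
  exact lfp_fix (fun y => upperOp Δ Io (wfLower Δ Io) y) (fun _ _ hxy => upperOp_mono_y hxy)

lemma wfUpper_le_prefix {Δ : Defn σ' D'} {Io : Struct σ' D'} {y : Set (Atom σ' D')}
    (h : upperOp Δ Io (wfLower Δ Io) y ⊆ y) : wfUpper Δ Io ⊆ y := by
  rw [(wf_fix Δ Io).2]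
  exact Set.sInter_subset_of_mem h

end Aux

/-- Proposition 1: if `J` justifies `L` over `Δ`, then every literal in
`J_L` is true in every model of `Δ` in which all open leaves of `J_L` are true. -/
theorem justified_literals_true_in_models (σ : Voc) (D : Type) [Nonempty D]
    (Δ : Defn σ D) (hΔ : WellFormed Δ)
    (J : Lit σ D → Set (Lit σ D)) (hJ : IsJustification Δ J)
    (L : Set (Lit σ D)) (hjust : Justifies Δ J L)
    (M : Struct σ D) (hM : IsModelOfDef M Δ)
    (hleaves : ∀ x ∈ reachSet J L, J x = ∅ → openLit Δ x → litTrue M x) :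
    ∀ x ∈ reachSet J L, litTrue M x := by
  classical
  obtain ⟨hM2v, hMwf⟩ := hM
  have hMeq : combine Δ M (wfLower Δ M) (wfUpper Δ M) = M := by
    funext a
    have h := hMwf a
    unfold wfModel at h
    exact h.symm
  -- dichotomy for literals in a two-valued structure
  have hdi : ∀ z : Lit σ D, ¬ litTrue M z → litFalse M z := by
    intro z hz
    cases z with
    | pos a =>
      rcases hM2v a with h | h
      · exact absurd h hz
      · exact h
    | neg a =>
      rcases hM2v a with h | h
      · exact h
      · exact absurd h hz
  have hTF : ∀ z : Lit σ D, litTrue M z → litFalse M z → False := by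
    intro z h1 h2
    cases z with
    | pos a => exact absurd ((h1 : M a = TV.t).symm.trans h2) (by decide)
    | neg a => exact absurd ((h2 : M a = TV.t).symm.trans h1) (by decide)
  -- characterization of defined atoms in the model
  have hmem : ∀ a, definedAtom Δ a →
      ((a ∈ wfLower Δ M ∧ a ∈ wfUpper Δ M ∧ M a = TV.t) ∨
       (a ∉ wfLower Δ M ∧ a ∉ wfUpper Δ M ∧ M a = TV.f)) := by
    intro a hda
    have hc := hMwf a
    unfold wfModel combine at hc
    rw [if_pos hda] at hc
    by_cases hx : a ∈ wfLower Δ M <;> by_cases hy : a ∈ wfUpper Δ M <;>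
        simp only [hx, hy, if_pos, if_neg, if_true, if_false] at hc
    · exact Or.inl ⟨hx, hy, hc⟩
    · rcases hM2v a with h | h <;> rw [hc] at h <;> exact absurd h (by decide)
    · rcases hM2v a with h | h <;> rw [hc] at h <;> exact absurd h (by decide)
    · exact Or.inr ⟨hx, hy, hc⟩
  -- children of reachable literals are reachable
  have hchild : ∀ x ∈ reachSet J L, ∀ y ∈ J x, y ∈ reachSet J L := by
    rintro x ⟨l, hl, hr⟩ y hy
    exact ⟨l, hl, hr.tail hy⟩
  -- the set of reachable literals false in M
  set Bad : Set (Lit σ D) := {x | x ∈ reachSet J L ∧ litFalse M x} with hBadDef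
  have hBadelim : ∀ z ∈ Bad, z ∈ reachSet J L ∧ litFalse M z := fun z hz => hz
  have hBadintro : ∀ z, z ∈ reachSet J L → litFalse M z → z ∈ Bad := fun z h1 h2 => ⟨h1, h2⟩
  -- every bad literal is defined and has a direct justification
  have hBadJ : ∀ x ∈ Bad, definedLit Δ x ∧ IsDirectJust Δ x (J x) := by
    intro x hx
    rcases hJ x with h0 | hdj
    · by_cases hdef : definedLit Δ x
      · exact absurd h0 (hjust.1 x (hBadelim x hx).1 hdef)
      · exact absurd (hleaves x (hBadelim x hx).1 h0 hdef)
          (fun ht => hTF x ht (hBadelim x hx).2)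
    · obtain ⟨-, -, r, hr, d, hd, heq, -⟩ := id hdj
      exact ⟨⟨r, hr, d, hd, heq⟩, hdj⟩
  -- comparison of the structure of a literal set with a structure
  have hts : ∀ S : Set (Lit σ D), ConsistentSet S → ∀ N : Struct σ D,
      (∀ c, Lit.pos c ∈ S → N c = TV.t ∨ N c = TV.i) →
      (∀ c, Lit.neg c ∈ S → N c = TV.f ∨ N c = TV.i) →
      ∀ c, (toStruct S c).precLe (N c) := by
    intro S hS N hp hn c
    unfold toStruct
    by_cases h1 : Lit.pos c ∈ S
    · have h2 : Lit.neg c ∉ S := fun h2 => hS c ⟨h1, h2⟩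
      rw [if_pos h1, if_neg h2]
      rcases hp c h1 with h | h <;> rw [h] <;> decide
    · rw [if_neg h1]
      by_cases h2 : Lit.neg c ∈ S
      · rw [if_pos h2]
        rcases hn c h2 with h | h <;> rw [h] <;> decide
      · rw [if_neg h2]
        exact TV.u_precLe _
  -- step lemma: every bad literal has a bad child
  have hstep : ∀ x ∈ Bad, ∃ y, y ∈ J x ∧ y ∈ Bad := by
    intro x hx
    by_contra hno
    push_neg at hno
    obtain ⟨hdefx, hCons, hNe, r, hr, d, hd, heq, heval⟩ := hBadJ x hx
    have hallT : ∀ m ∈ J x, litTrue M m := by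
      intro m hm
      by_contra hmt
      exact hno m hm (hBadintro m (hchild x (hBadelim x hx).1 m hm) (hdi m hmt))
    have hle : ∀ c, (toStruct (J x) c).precLe (M c) := by
      apply hts _ hCons
      · intro c hc; exact Or.inl (hallT _ hc)
      · intro c hc; exact Or.inl (hallT _ hc)
    have hmono := eval_prec_mono hle (r.body d)
    rw [heval] at hmono
    cases x with
    | pos a =>
      have hxf : M a = TV.f := (hBadelim _ hx).2
      have ha : a = ⟨r.head, d⟩ := heq
      have hevalM : (r.body d).eval M = TV.t := TV.eq_t_of hmono (eval_twoval hM2v _)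
      have hbv : bodyVal Δ M a = TV.t := by rw [ha, bodyVal_eq hΔ hr hd]; exact hevalM
      have hlow : a ∈ lowerOp Δ M (wfLower Δ M) (wfUpper Δ M) := by
        refine ⟨hdefx, ?_⟩
        rw [hMeq, hbv]
        exact Or.inl rfl
      rw [lowerOp_wf_fix] at hlow
      rcases hmem a hdefx with ⟨-, -, hMa⟩ | ⟨hnx, -, -⟩
      · rw [hMa] at hxf; exact absurd hxf (by decide)
      · exact hnx hlow
    | neg a =>
      have hxf : M a = TV.t := (hBadelim _ hx).2
      have ha : a = ⟨r.head, d⟩ := heq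
      have hevalM : (r.body d).eval M = TV.f := TV.eq_f_of hmono (eval_twoval hM2v _)
      have hbv : bodyVal Δ M a = TV.f := by rw [ha, bodyVal_eq hΔ hr hd]; exact hevalM
      rcases hmem a hdefx with ⟨-, hyU, -⟩ | ⟨-, -, hMa⟩
      · have hup : a ∈ upperOp Δ M (wfLower Δ M) (wfUpper Δ M) := by
          rw [upperOp_wf_fix]; exact hyU
        obtain ⟨-, hb⟩ := hup
        rw [hMeq, hbv] at hb
        rcases hb with h | h <;> exact absurd h (by decide)
      · rw [hMa] at hxf; exact absurd hxf (by decide)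
  -- every bad literal is negative
  have hneg : ∀ x ∈ Bad, x.isNeg := by
    intro x hx
    obtain ⟨l0, hl0, hreach⟩ := (hBadelim x hx).1
    let g : {z // z ∈ Bad} → {z // z ∈ Bad} :=
      fun s => ⟨(hstep s.1 s.2).choose, (hstep s.1 s.2).choose_spec.2⟩
    let p : ℕ → Lit σ D := fun n => (g^[n] ⟨x, hx⟩).1
    have hp0 : p 0 = x := rfl
    have hedge : ∀ n, p (n + 1) ∈ J (p n) := by
      intro n
      show (g^[n + 1] ⟨x, hx⟩).1 ∈ J (p n)
      rw [Function.iterate_succ_apply' g n]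
      exact (hstep _ (g^[n] ⟨x, hx⟩).2).choose_spec.1
    have hwf := hjust.2.1 l0 hl0 p ⟨by rw [hp0]; exact hreach, hedge⟩ 0
    rw [hp0] at hwf
    exact hwf
  -- the unfounded-set argument
  set A : Set (Atom σ D) := {a | Lit.neg a ∈ Bad} with hAdef
  have hAelim : ∀ a ∈ A, Lit.neg a ∈ Bad := fun a ha => ha
  have hclaim : upperOp Δ M (wfLower Δ M) (wfUpper Δ M \ A) ⊆ wfUpper Δ M \ A := by
    rintro b ⟨hdb, hb⟩
    by_cases hbA : b ∈ A
    · exfalso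
      have hbBad : Lit.neg b ∈ Bad := hAelim b hbA
      obtain ⟨hdefb, hCons, hNe, r, hr, d, hd, heq, heval⟩ := hBadJ _ hbBad
      have hbeq : b = ⟨r.head, d⟩ := heq
      have hle : ∀ c, (toStruct (J (Lit.neg b)) c).precLe
          (combine Δ M (wfLower Δ M) (wfUpper Δ M \ A) c) := by
        apply hts _ hCons
        · -- positive children are true in M
          intro c hc
          have hcr : Lit.pos c ∈ reachSet J L :=
            hchild _ (hBadelim _ hbBad).1 _ hc
          have hMc : M c = TV.t := by
            by_contra h
            exact hneg _ (hBadintro _ hcr (hdi _ h))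
          by_cases hdc : definedAtom Δ c
          · rcases hmem c hdc with ⟨hxL, -, -⟩ | ⟨-, -, hMf⟩
            · simp only [combine]
              rw [if_pos hdc, if_pos hxL]
              by_cases hcy : c ∈ wfUpper Δ M \ A
              · rw [if_pos hcy]; exact Or.inl rfl
              · rw [if_neg hcy]; exact Or.inr rfl
            · rw [hMc] at hMf; exact absurd hMf (by decide)
          · simp only [combine]
            rw [if_neg hdc]
            exact Or.inl hMc
        · -- negative children
          intro c hc
          have hcr : Lit.neg c ∈ reachSet J L :=
            hchild _ (hBadelim _ hbBad).1 _ hc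
          by_cases hcB : Lit.neg c ∈ Bad
          · have hdc : definedAtom Δ c := (hBadJ _ hcB).1
            have hMc : M c = TV.t := (hBadelim _ hcB).2
            rcases hmem c hdc with ⟨hxL, -, -⟩ | ⟨-, -, hMf⟩
            · simp only [combine]
              rw [if_pos hdc, if_pos hxL,
                if_neg (show c ∉ wfUpper Δ M \ A from fun hy => hy.2 hcB)]
              exact Or.inr rfl
            · rw [hMc] at hMf; exact absurd hMf (by decide)
          · have hMc : M c = TV.f := by
              by_contra h
              exact hcB (hBadintro _ hcr (hdi _ h))
            by_cases hdc : definedAtom Δ c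
            · rcases hmem c hdc with ⟨-, -, hMt⟩ | ⟨hnx, hny, -⟩
              · rw [hMc] at hMt; exact absurd hMt (by decide)
              · simp only [combine]
                rw [if_pos hdc, if_neg hnx,
                  if_neg (show c ∉ wfUpper Δ M \ A from fun hy => hny hy.1)]
                exact Or.inl rfl
            · simp only [combine]
              rw [if_neg hdc]
              exact Or.inl hMc
      have hmono := eval_prec_mono hle (r.body d)
      rw [heval] at hmono
      rw [hbeq, bodyVal_eq hΔ hr hd] at hb
      exact TV.f_not_tu hmono hb
    · -- b ∉ A : M is below the modified combination, so the body is true in M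
      have hMM' : ∀ c, (M c).precLe
          (combine Δ M (wfLower Δ M) (wfUpper Δ M \ A) c) := by
        intro c
        by_cases hdc : definedAtom Δ c
        · rcases hmem c hdc with ⟨hxL, -, hMt⟩ | ⟨hnx, hny, hMf⟩
          · rw [hMt]
            simp only [combine]
            rw [if_pos hdc, if_pos hxL]
            by_cases hcy : c ∈ wfUpper Δ M \ A
            · rw [if_pos hcy]; exact TV.precLe_refl _
            · rw [if_neg hcy]; decide
          · rw [hMf]
            simp only [combine]
            rw [if_pos hdc, if_neg hnx,
              if_neg (show c ∉ wfUpper Δ M \ A from fun hy => hny hy.1)]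
            exact TV.precLe_refl _
        · simp only [combine]
          rw [if_neg hdc]
          exact TV.precLe_refl _
      have hmono := bodyVal_prec_mono (Δ := Δ) hMM' b
      have hdb' := hdb
      obtain ⟨r, hr, d, hd, hbeq⟩ := hdb'
      rw [hbeq] at hmono hb
      simp only [bodyVal_eq hΔ hr hd] at hmono hb
      rcases eval_twoval hM2v (r.body d) with hT | hF
      · have hbU : b ∈ wfUpper Δ M := by
          rw [← upperOp_wf_fix Δ M]
          refine ⟨hdb, ?_⟩
          rw [hMeq, hbeq, bodyVal_eq hΔ hr hd]
          exact Or.inl hT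
        exact ⟨hbU, hbA⟩
      · rw [hF] at hmono
        exact (TV.f_not_tu hmono hb).elim
  -- conclusion
  intro x hx
  by_contra hxt
  have hxBad : x ∈ Bad := hBadintro x hx (hdi x hxt)
  have hwfUle : wfUpper Δ M ⊆ wfUpper Δ M \ A := wfUpper_le_prefix hclaim
  have hxn := hneg x hxBad
  cases x with
  | pos a => exact hxn
  | neg a0 =>
    have ha0 : a0 ∈ A := hxBad
    have hd0 : definedAtom Δ a0 := (hBadJ _ hxBad).1
    have hMt : M a0 = TV.t := (hBadelim _ hxBad).2
    rcases hmem a0 hd0 with ⟨-, hU, -⟩ | ⟨-, -, hMf⟩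
    · exact (hwfUle hU).2 ha0
    · rw [hMt] at hMf; exact absurd hMf (by decide)

end LazyMX
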